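/- (Montel's theorem) Let h_1, …, h_t ∈ ℝ^d be vectors such that the additive subgroup of ℝ^d they generate is dense in ℝ^d, let n be a natural number, and let f : ℝ^d → ℝ be a continuous function satisfying Δ_{h_k}^{n+1} f(x) = 0 for all x ∈ ℝ^d and all k = 1, …, t. Then f is an ordinary polynomial. -/

import Mathlib

/-- The forward difference operator: `(Δ_h f)(x) = f(x + h) - f(x)`. -/
def fdiff {G M : Type*} [Add G] [Sub M] (h : G) (f : G → M) : G → M :=
  fun x => f (x + h) - f x

/-!
Let `δ g = [g] - 1` in the group ring `ℤ[ℝ^d]`, which acts on functions by translations, `δ g`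
acting as `Δ_g`. Since `δ (u + v) = [v] δ u + δ v` and `δ (-u) = -[-u] δ u`, every `δ g` with `g`
in the subgroup generated by the `h_k` lies in the ideal generated by the `δ h_k`, so
`δ g ^ (t n + 1)` lies in the ideal generated by the `δ h_k ^ (n + 1)`, which kill `f`. Hence
`Δ_g^(t n + 1) f = 0` for a dense set of `g`, and by continuity for all `g`.

On a line, such a function agrees on each grid `s ℤ` with its Lagrange interpolant at
`0, s, …, (N - 1) s`. The interpolants for `s = 1 / q` all coincide with the one for `s = 1`, so
the function is a polynomial on `ℚ`, hence on `ℝ`. Interpolating in the first coordinate and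
inducting on `d` gives a polynomial in `d` variables.
-/

open Finset Function Polynomial fwdDiff fwdDiff_aux

section ShiftAlgHom

variable {M G : Type*} [AddCommMonoid M] [AddCommGroup G]

variable (M G) in
def shiftMonoidHom : Multiplicative M →* Module.End ℤ (M → G) where
  toFun g := shiftₗ M G g.toAdd
  map_one' := by ext f x; simp [shiftₗ_apply]
  map_mul' a b := by ext f x; simp [shiftₗ_apply, add_assoc]

variable (M G) in
noncomputable def shiftAlgHom : AddMonoidAlgebra ℤ M →ₐ[ℤ] Module.End ℤ (M → G) :=
  AddMonoidAlgebra.lift ℤ (Module.End ℤ (M → G)) M (shiftMonoidHom M G)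

lemma shiftAlgHom_of'_sub_one (g : M) :
    shiftAlgHom M G (AddMonoidAlgebra.of' ℤ M g - 1) = fwdDiffₗ M G g := by
  simp [shiftAlgHom, shiftMonoidHom, shiftₗ]

lemma shiftAlgHom_of'_sub_one_pow_apply (g : M) (N : ℕ) (f : M → G) :
    shiftAlgHom M G ((AddMonoidAlgebra.of' ℤ M g - 1) ^ N) f = Δ_[g] ^[N] f := by
  rw [map_pow, shiftAlgHom_of'_sub_one, ← coe_fwdDiffₗ_pow]

lemma shiftAlgHom_apply_eq_zero_of_mem_span {S : Set (AddMonoidAlgebra ℤ M)} {f : M → G}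
    (hS : ∀ a ∈ S, shiftAlgHom M G a f = 0) {a : AddMonoidAlgebra ℤ M}
    (ha : a ∈ Ideal.span S) : shiftAlgHom M G a f = 0 := by
  induction ha using Submodule.span_induction with
  | mem a ha => exact hS a ha
  | zero => simp
  | add a b _ _ ha hb => simp [ha, hb]
  | smul c a _ ha => simp [Module.End.mul_apply, ha]

end ShiftAlgHom

section

open AddMonoidAlgebra

variable {R M : Type*} [CommRing R] [AddCommGroup M]

lemma of'_sub_one_mem_span_of_mem_closure {S : Set M} {g : M}
    (hg : g ∈ AddSubgroup.closure S) :
    of' R M g - 1 ∈ Ideal.span ((fun u => of' R M u - 1) '' S) := by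
  induction hg using AddSubgroup.closure_induction with
  | mem u hu => exact Ideal.subset_span ⟨u, hu, rfl⟩
  | zero => simp [of'_apply, ← one_def]
  | add u v _ _ hu hv =>
    have : of' R M (u + v) - 1 = of' R M v * (of' R M u - 1) + (of' R M v - 1) := by
      simp only [of'_apply, single_mul_single, mul_sub, mul_one, add_comm v u]
      ring
    rw [this]
    exact add_mem (Ideal.mul_mem_left _ _ hu) hv
  | neg u _ hu =>
    have : of' R M (-u) - 1 = -(of' R M (-u) * (of' R M u - 1)) := by
      simp [of'_apply, single_mul_single, mul_sub, ← one_def]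
    rw [this]
    exact neg_mem (Ideal.mul_mem_left _ _ hu)

end

lemma Ideal.pow_mem_span_range_pow_of_mem_span_range {R ι : Type*} [CommRing R] [Fintype ι]
    {v : ι → R} {x : R} (hx : x ∈ Ideal.span (Set.range v)) (n : ℕ) :
    x ^ (Fintype.card ι * n + 1) ∈ Ideal.span (Set.range (v · ^ (n + 1))) := by
  obtain ⟨c, rfl⟩ := Ideal.mem_span_range_iff_exists_fun.mp hx
  refine Ideal.span_le.mpr ?_ (Ideal.sum_pow_mem_span_pow univ (fun i => c i * v i) n)
  rintro _ ⟨i, -, rfl⟩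
  simp only [SetLike.mem_coe, mul_pow]
  exact Ideal.mul_mem_left _ _ (Ideal.subset_span ⟨i, rfl⟩)

theorem fwdDiff_iter_eq_zero_of_mem_closure {M G ι : Type*} [AddCommGroup M] [AddCommGroup G]
    [Fintype ι] (h : ι → M) {f : M → G} {n : ℕ} (hf : ∀ k x, Δ_[h k] ^[n + 1] f x = 0)
    {g : M} (hg : g ∈ AddSubgroup.closure (Set.range h)) (x : M) :
    Δ_[g] ^[Fintype.card ι * n + 1] f x = 0 := by
  have hδ := of'_sub_one_mem_span_of_mem_closure (R := ℤ) hg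
  rw [← Set.range_comp] at hδ
  have hpow := Ideal.pow_mem_span_range_pow_of_mem_span_range hδ n
  rw [← shiftAlgHom_of'_sub_one_pow_apply]
  refine congrFun (shiftAlgHom_apply_eq_zero_of_mem_span ?_ hpow) x
  rintro _ ⟨k, rfl⟩
  simp only [comp_apply, shiftAlgHom_of'_sub_one_pow_apply]
  exact funext (hf k)

theorem fwdDiff_iter_comp_of_map_add {M M' G : Type*} [AddCommMonoid M] [AddCommMonoid M']
    [AddCommGroup G] {A : M → M'} {s : M} {w : M'} (hA : ∀ y, A (y + s) = A y + w)
    (f : M' → G) (N : ℕ) : Δ_[s] ^[N] (fun y => f (A y)) = fun y => Δ_[w] ^[N] f (A y) := by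
  have : Semiconj (· ∘ A) (Δ_[w]) (Δ_[s] : (M → G) → M → G) := fun F => by
    ext y; simp [fwdDiff, hA]
  exact (this.iterate_right N f).symm

theorem continuous_fwdDiff_iter_apply {M G : Type*} [AddCommMonoid M] [TopologicalSpace M]
    [ContinuousAdd M] [AddCommGroup G] [TopologicalSpace G] [IsTopologicalAddGroup G]
    {f : M → G} (hf : Continuous f) (N : ℕ) (x : M) : Continuous fun g => Δ_[g] ^[N] f x := by
  simp_rw [fwdDiff_iter_eq_sum_shift]
  fun_prop

theorem fwdDiff_iter_eq_zero_of_dense {M G : Type*} [AddCommMonoid M] [TopologicalSpace M]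
    [ContinuousAdd M] [AddCommGroup G] [TopologicalSpace G] [IsTopologicalAddGroup G] [T2Space G]
    {f : M → G} (hf : Continuous f) {N : ℕ} {S : Set M} (hS : Dense S)
    (hΔ : ∀ g ∈ S, ∀ x, Δ_[g] ^[N] f x = 0) (g x : M) : Δ_[g] ^[N] f x = 0 :=
  congrFun (Continuous.ext_on hS (continuous_fwdDiff_iter_apply hf N x) continuous_const
    fun g hg => hΔ g hg x) g

theorem apply_add_zsmul_eq_zero_of_fwdDiff_iter_eq_zero {M G : Type*} [AddCommGroup M]
    [AddCommGroup G] {s a : M} : ∀ {N : ℕ} {ψ : M → G}, (∀ x, Δ_[s] ^[N] ψ x = 0) →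
    (∀ k < N, ψ (a + k • s) = 0) → ∀ m : ℤ, ψ (a + m • s) = 0
  | 0, ψ, hψ, _, m => hψ _
  | N + 1, ψ, hψ, hzero, m => by
    have hΔψ : ∀ m : ℤ, Δ_[s] ψ (a + m • s) = 0 := by
      refine apply_add_zsmul_eq_zero_of_fwdDiff_iter_eq_zero (N := N) (fun x => ?_) fun k hk => ?_
      · rw [← iterate_succ_apply, hψ]
      · rw [fwdDiff, add_assoc, ← succ_nsmul, hzero k (by omega), hzero (k + 1) (by omega),
          sub_zero]
    induction m using Int.induction_on with
    | zero => simpa using hzero 0 (by omega)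
    | succ m ih =>
      have := hΔψ m
      rwa [fwdDiff, ih, sub_zero, add_assoc, ← add_one_zsmul] at this
    | pred m ih =>
      have := hΔψ (-m - 1)
      rwa [fwdDiff, add_assoc, ← add_one_zsmul, sub_add_cancel, ih, zero_sub, neg_eq_zero] at this

theorem Polynomial.fwdDiff_iter_eval_eq_zero_of_degree_lt {K : Type*} [Field K] {P : K[X]}
    {N : ℕ} (hP : P.degree < N) (s : K) : Δ_[s] ^[N] P.eval = 0 := by
  rcases eq_or_ne P 0 with rfl | hP0
  · simp only [eval_zero]
    exact iterate_fixed (fwdDiff_const s 0) N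
  replace hP := (natDegree_lt_iff_degree_lt hP0).mpr hP
  rcases eq_or_ne s 0 with rfl | hs
  · obtain ⟨N, rfl⟩ : ∃ k, N = k + 1 := ⟨N - 1, by omega⟩
    rw [iterate_succ_apply']
    ext x
    simp [fwdDiff]
  have hcomp : P.eval = fun x => (P.comp (C s * X)).eval (x / s) := by
    ext x
    simp [mul_div_cancel₀ _ hs]
  have hdeg : (P.comp (C s * X)).natDegree < N := by
    rwa [natDegree_comp, natDegree_C_mul_X s hs, mul_one]
  rw [hcomp, fwdDiff_iter_comp_of_map_add (A := (· / s)) (w := 1)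
    (fun y => by rw [add_div, div_self hs]) (P.comp (C s * X)).eval,
    fwdDiff_iter_eq_zero_of_degree_lt hdeg]
  rfl

section Grid

variable {K : Type*} [Field K] [CharZero K]

noncomputable def gridInterpolant (φ : K → K) (N : ℕ) (s : K) : K[X] :=
  Lagrange.interpolate (range N) (fun i : ℕ => (i : K) * s) fun i => φ (i * s)

lemma injOn_natCast_mul {s : K} (hs : s ≠ 0) (N : ℕ) :
    Set.InjOn (fun i : ℕ => (i : K) * s) (range N) := fun i _ j _ hij => by
  simpa [hs] using hij

lemma degree_gridInterpolant_lt (φ : K → K) (N : ℕ) {s : K} (hs : s ≠ 0) :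
    (gridInterpolant φ N s).degree < N := by
  have := Lagrange.degree_interpolate_lt (fun i : ℕ => φ (i * s)) (injOn_natCast_mul hs N)
  rwa [card_range] at this

theorem apply_intCast_mul_eq_eval_gridInterpolant {φ : K → K} {N : ℕ} {s : K} (hs : s ≠ 0)
    (hΔ : ∀ x, Δ_[s] ^[N] φ x = 0) (m : ℤ) :
    φ (m * s) = (gridInterpolant φ N s).eval (m * s) := by
  have hψ : ∀ x, Δ_[s] ^[N] (φ - (gridInterpolant φ N s).eval) x = 0 := fun x => by
    rw [← coe_fwdDiffₗ_pow, map_sub, coe_fwdDiffₗ_pow,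
      fwdDiff_iter_eval_eq_zero_of_degree_lt (degree_gridInterpolant_lt φ N hs), Pi.sub_apply,
      hΔ, Pi.zero_apply, sub_zero]
  have hnodes : ∀ k < N, (φ - (gridInterpolant φ N s).eval) (0 + k • s) = 0 := fun k hk => by
    rw [zero_add, nsmul_eq_mul, Pi.sub_apply, sub_eq_zero, gridInterpolant,
      Lagrange.eval_interpolate_at_node _ (injOn_natCast_mul hs N) (mem_range.mpr hk)]
  have := apply_add_zsmul_eq_zero_of_fwdDiff_iter_eq_zero hψ hnodes m
  rwa [zero_add, zsmul_eq_mul, Pi.sub_apply, sub_eq_zero] at this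

theorem gridInterpolant_inv_natCast_eq {φ : K → K} {N q : ℕ} (hq : q ≠ 0)
    (hΔ : ∀ x, Δ_[(q : K)⁻¹] ^[N] φ x = 0) :
    gridInterpolant φ N (q : K)⁻¹ = gridInterpolant φ N 1 := by
  have hq' : (q : K)⁻¹ ≠ 0 := by simpa using hq
  refine Lagrange.eq_interpolate_of_eval_eq _ (injOn_natCast_mul one_ne_zero N)
    (by simpa using degree_gridInterpolant_lt φ N hq') fun i _ => ?_
  have hnode : (i : K) * 1 = ((i * q : ℕ) : ℤ) * (q : K)⁻¹ := by
    push_cast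
    field_simp
  rw [hnode, ← apply_intCast_mul_eq_eval_gridInterpolant hq' hΔ]

end Grid

theorem eq_eval_gridInterpolant_of_fwdDiff_iter_eq_zero {φ : ℝ → ℝ} (hφ : Continuous φ)
    {N : ℕ} (hΔ : ∀ s x, Δ_[s] ^[N] φ x = 0) (x : ℝ) : φ x = (gridInterpolant φ N 1).eval x := by
  refine congrFun (Continuous.ext_on Rat.denseRange_cast hφ (Polynomial.continuous _) ?_) x
  rintro _ ⟨r, rfl⟩
  have hden : (r.den : ℝ) ≠ 0 := by positivity
  have hr : (r : ℝ) = (r.num : ℝ) * (r.den : ℝ)⁻¹ := by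
    rw [Rat.cast_def, div_eq_mul_inv]
  rw [← gridInterpolant_inv_natCast_eq r.den_ne_zero (hΔ _), hr]
  exact apply_intCast_mul_eq_eval_gridInterpolant (inv_ne_zero hden) (hΔ _) r.num

theorem MvPolynomial.exists_eval_eq_of_eval_finCons {R ι : Type*} [CommRing R] {d : ℕ}
    (F : (Fin (d + 1) → R) → R) (s : Finset ι) (p : ι → R[X]) (P : ι → MvPolynomial (Fin d) R)
    (hF : ∀ t y, F (Fin.cons t y) = ∑ i ∈ s, (p i).eval t * eval y (P i)) :
    ∃ Q : MvPolynomial (Fin (d + 1)) R, ∀ x, F x = eval x Q := by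
  refine ⟨∑ i ∈ s, Polynomial.aeval (X 0) (p i) * rename Fin.succ (P i), fun x => ?_⟩
  have heval : ∀ q : R[X], eval x (Polynomial.aeval (X 0) q) = q.eval (x 0) := fun q => by
    simpa [coe_aeval_eq_eval] using (Polynomial.aeval_algHom_apply (aeval x) (X 0) q).symm
  conv_lhs => rw [← Fin.cons_self_tail x, hF]
  simp [eval_rename, heval]
  rfl

theorem exists_mvPolynomial_of_fwdDiff_iter_eq_zero {N : ℕ} :
    ∀ {d : ℕ} (f : (Fin d → ℝ) → ℝ), Continuous f → (∀ g x, Δ_[g] ^[N] f x = 0) →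
    ∃ P : MvPolynomial (Fin d) ℝ, ∀ x, f x = MvPolynomial.eval x P
  | 0, f, _, _ => ⟨MvPolynomial.C (f 0), fun x => by simp [Subsingleton.elim x 0]⟩
  | d + 1, f, hf, hΔ => by
    have hslice (c : ℝ) :
        ∃ P : MvPolynomial (Fin d) ℝ, ∀ y, f (Fin.cons c y) = MvPolynomial.eval y P := by
      refine exists_mvPolynomial_of_fwdDiff_iter_eq_zero (N := N) _ (by fun_prop) fun g y => ?_
      rw [fwdDiff_iter_comp_of_map_add (w := Fin.cons 0 g) fun y => by
        ext i; cases i using Fin.cases <;> simp]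
      exact hΔ _ _
    choose P hP using hslice
    refine MvPolynomial.exists_eval_eq_of_eval_finCons f (range N)
      (fun i => Lagrange.basis (range N) (fun i : ℕ => (i : ℝ) * 1) i) (fun i => P (i * 1))
      fun t y => ?_
    have hline : ∀ s x, Δ_[s] ^[N] (fun t => f (Fin.cons t y)) x = 0 := fun s x => by
      rw [fwdDiff_iter_comp_of_map_add (w := Fin.cons s 0) fun y => by
        ext i; cases i using Fin.cases <;> simp]
      exact hΔ _ _
    rw [eq_eval_gridInterpolant_of_fwdDiff_iter_eq_zero (by fun_prop) hline t, gridInterpolant,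
      Lagrange.interpolate_apply, eval_finsetSum]
    simp [hP, mul_comm]

/-- **Montel's theorem.** -/
theorem montel {d t : ℕ} (h : Fin t → (Fin d → ℝ))
    (hdense : Dense ((AddSubgroup.closure (Set.range h) : AddSubgroup (Fin d → ℝ)) :
      Set (Fin d → ℝ)))
    (n : ℕ) (f : (Fin d → ℝ) → ℝ) (hf : Continuous f)
    (hdiff : ∀ k : Fin t, ∀ x, (fdiff (h k))^[n + 1] f x = 0) :
    ∃ P : MvPolynomial (Fin d) ℝ, ∀ x, f x = MvPolynomial.eval x P := by
  have hΔ : ∀ g x, Δ_[g] ^[t * n + 1] f x = 0 :=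
    fwdDiff_iter_eq_zero_of_dense hf hdense fun g hg x => by
      simpa using fwdDiff_iter_eq_zero_of_mem_closure h hdiff hg x
  exact exists_mvPolynomial_of_fwdDiff_iter_eq_zero f hf hΔ
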